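/- arXiv:1911.02764 — 2 statements merged into one kernel-verified Lean document; each statement's English description precedes it below -/
import Mathlib

section
/- Let p, B, k be positive integers with B dividing p, let ε > 0 and suppose B ≥ k^(1+ε). Let the p items be partitioned uniformly at random into B equal bins, let S ⊆ Fin p be a fixed set of k items, and let N_col be the number of items i ∈ S sharing a bin with at least one other item of S. Then for every α > 0, the probability that N_col ≥ (α/3)·k is at most (3/α)·k^(−ε). -/
open scoped ENNReal
open Finset

/-!
Markov's inequality reduces the claim to `𝔼[N_col] ≤ k² / B`. By the union bound,
`N_col ≤ ∑_{i ≠ j ∈ S} [σ i, σ j in the same bin]`, and each pair collides with probability at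
most `1/B`: right-multiplying `σ` by the transposition `(j j')` shows that the collision count of
`(i, j)` does not depend on `j ≠ i`, while summing over all `j ≠ i` counts, for each `σ`, the
`p/B - 1` other slots of the bin of `σ i`. Finally `k / B ≤ k^(-ε)` since `k^(1+ε) ≤ B`.
-/

section Collision

variable {α β : Type*} [Fintype α] [DecidableEq α] [DecidableEq β]

theorem card_perm_collision_eq_of_ne (f : α → β) {i j j' : α} (hj : j ≠ i) (hj' : j' ≠ i) :
    #{σ : Equiv.Perm α | f (σ j) = f (σ i)} = #{σ : Equiv.Perm α | f (σ j') = f (σ i)} := by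
  refine card_equiv (Equiv.mulRight (Equiv.swap j j')) fun σ => ?_
  simp [Equiv.swap_apply_of_ne_of_ne hj.symm hj'.symm]

theorem card_collision_erase_le (f : α → β) {m : ℕ} (hf : ∀ b, #{x | f x = b} ≤ m)
    (σ : Equiv.Perm α) (i : α) :
    #{j ∈ univ.erase i | f (σ j) = f (σ i)} ≤ m - 1 := by
  have hfiber : #{j | f (σ j) = f (σ i)} = #{x | f x = f (σ i)} :=
    card_equiv σ fun j => by simp
  rw [filter_erase, card_erase_of_mem (by simp), hfiber]
  exact Nat.sub_le_sub_right (hf _) 1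

theorem card_perm_collision_mul_card_le (f : α → β) {m : ℕ} (hf : ∀ b, #{x | f x = b} ≤ m)
    {i j : α} (hij : j ≠ i) :
    #{σ : Equiv.Perm α | f (σ j) = f (σ i)} * Fintype.card α
      ≤ Fintype.card (Equiv.Perm α) * m := by
  set c := #{σ : Equiv.Perm α | f (σ j) = f (σ i)}
  have hsum : c * (Fintype.card α - 1) ≤ Fintype.card (Equiv.Perm α) * (m - 1) := calc
    c * (Fintype.card α - 1)
        = ∑ j' ∈ univ.erase i, #{σ : Equiv.Perm α | f (σ j') = f (σ i)} := by
      rw [sum_congr rfl fun j' hj' =>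
          (card_perm_collision_eq_of_ne f hij (ne_of_mem_erase hj')).symm,
        sum_const, card_erase_of_mem (mem_univ i), card_univ, smul_eq_mul, mul_comm]
    _ = ∑ σ : Equiv.Perm α, #{j' ∈ univ.erase i | f (σ j') = f (σ i)} := by
      simp only [card_filter]
      exact sum_comm
    _ ≤ ∑ _σ : Equiv.Perm α, (m - 1) := sum_le_sum fun σ _ => card_collision_erase_le f hf σ i
    _ = Fintype.card (Equiv.Perm α) * (m - 1) := by simp
  have hc : c ≤ Fintype.card (Equiv.Perm α) := card_le_univ _
  have hm : 1 ≤ m := (card_pos.2 ⟨i, by simp⟩ : 0 < #{x | f x = f i}).trans_le (hf (f i))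
  have hn : 1 ≤ Fintype.card α := Fintype.card_pos_iff.2 ⟨i⟩
  calc c * Fintype.card α = c * (Fintype.card α - 1) + c := by
        conv_lhs => rw [← Nat.sub_add_cancel hn]
        ring
    _ ≤ Fintype.card (Equiv.Perm α) * (m - 1) + Fintype.card (Equiv.Perm α) :=
        add_le_add hsum hc
    _ = Fintype.card (Equiv.Perm α) * m := by
        conv_rhs => rw [← Nat.sub_add_cancel hm]
        ring

theorem sum_card_collided_mul_card_le (f : α → β) {m : ℕ} (hf : ∀ b, #{x | f x = b} ≤ m)
    (S : Finset α) :
    (∑ σ : Equiv.Perm α, #{i ∈ S | ∃ j ∈ S, j ≠ i ∧ f (σ j) = f (σ i)}) * Fintype.card α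
      ≤ #S ^ 2 * Fintype.card (Equiv.Perm α) * m := by
  have hunion (σ : Equiv.Perm α) : #{i ∈ S | ∃ j ∈ S, j ≠ i ∧ f (σ j) = f (σ i)}
      ≤ ∑ i ∈ S, #{j ∈ S.erase i | f (σ j) = f (σ i)} := by
    rw [card_eq_sum_ones, sum_filter]
    refine sum_le_sum fun i _ => ?_
    split_ifs with h
    · obtain ⟨j, hjS, hji, hj⟩ := h
      exact one_le_card.2 ⟨j, by simp [hjS, hji, hj]⟩
    · exact Nat.zero_le _
  have hswap : ∑ σ : Equiv.Perm α, ∑ i ∈ S, #{j ∈ S.erase i | f (σ j) = f (σ i)}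
      = ∑ i ∈ S, ∑ j ∈ S.erase i, #{σ : Equiv.Perm α | f (σ j) = f (σ i)} := by
    simp only [card_filter]
    rw [sum_comm]
    exact sum_congr rfl fun i _ => sum_comm
  calc (∑ σ : Equiv.Perm α, #{i ∈ S | ∃ j ∈ S, j ≠ i ∧ f (σ j) = f (σ i)}) * Fintype.card α
      ≤ ∑ i ∈ S, ∑ j ∈ S.erase i,
          #{σ : Equiv.Perm α | f (σ j) = f (σ i)} * Fintype.card α := by
        simp only [← sum_mul]
        exact Nat.mul_le_mul_right _ ((sum_le_sum fun σ _ => hunion σ).trans_eq hswap)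
    _ ≤ ∑ _i ∈ S, ∑ _j ∈ S, Fintype.card (Equiv.Perm α) * m :=
        sum_le_sum fun i _ =>
          (sum_le_sum fun j hj => card_perm_collision_mul_card_le f hf (ne_of_mem_erase hj)).trans
            (sum_le_sum_of_subset (erase_subset i S))
    _ = #S ^ 2 * Fintype.card (Equiv.Perm α) * m := by simp [sq, mul_assoc]

end Collision

theorem card_filter_fin_div_eq_le {p m : ℕ} (hm : 0 < m) (q : ℕ) :
    #{x : Fin p | (x : ℕ) / m = q} ≤ m := by
  calc #{x : Fin p | (x : ℕ) / m = q} ≤ #(range m) := by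
        refine card_le_card_of_injOn (fun x => (x : ℕ) % m)
          (fun x _ => by simp [Nat.mod_lt _ hm]) fun x hx y hy hxy => ?_
        simp only [coe_filter, mem_univ, true_and, Set.mem_ofPred_eq] at hx hy
        have := Nat.div_add_mod (x : ℕ) m
        have := Nat.div_add_mod (y : ℕ) m
        exact Fin.ext (by simp_all)
    _ = m := card_range m

theorem toOuterMeasure_uniformOfFintype_le_sum_div {α : Type*} [Fintype α] [Nonempty α]
    (X : α → ℝ) (hX : ∀ a, 0 ≤ X a) {t : ℝ} (ht : 0 < t) :
    (PMF.uniformOfFintype α).toOuterMeasure {a | t ≤ X a}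
      ≤ ENNReal.ofReal ((∑ a, X a) / (t * Fintype.card α)) := by
  classical
  have hn : (0 : ℝ) < Fintype.card α := by exact_mod_cast Fintype.card_pos
  have hmarkov : #{a | t ≤ X a} * t ≤ ∑ a, X a := calc
    #{a | t ≤ X a} * t = ∑ a ∈ {a | t ≤ X a}, t := by simp
    _ ≤ ∑ a ∈ {a | t ≤ X a}, X a := sum_le_sum fun a ha => (mem_filter.1 ha).2
    _ ≤ ∑ a, X a := sum_le_sum_of_subset_of_nonneg (subset_univ _) fun a _ _ => hX a
  rw [PMF.toOuterMeasure_uniformOfFintype_apply, Fintype.card_subtype,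
    ← ENNReal.ofReal_natCast, ← ENNReal.ofReal_natCast (Fintype.card α),
    ← ENNReal.ofReal_div_of_pos hn]
  refine ENNReal.ofReal_le_ofReal ?_
  change (#{a | t ≤ X a} : ℝ) / _ ≤ _
  rw [div_le_div_iff₀ hn (by positivity)]
  nlinarith

theorem div_le_rpow_neg_of_rpow_one_add_le {k B ε : ℝ} (hk : 0 < k) (hB : k ^ (1 + ε) ≤ B) :
    k / B ≤ k ^ (-ε) := by
  have hB0 : 0 < B := (Real.rpow_pos_of_pos hk _).trans_le hB
  calc k / B = k ^ (1 + ε) * k ^ (-ε) / B := by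
        rw [← Real.rpow_add hk, add_neg_cancel_right, Real.rpow_one]
    _ ≤ B * k ^ (-ε) / B := by gcongr
    _ = k ^ (-ε) := by field_simp

theorem random_binning_collision_count_markov_general
    (p B k : ℕ) (hk : 0 < k) (hdvd : B ∣ p)
    (ε : ℝ) (hBk : (k : ℝ) ^ ((1 : ℝ) + ε) ≤ (B : ℝ))
    (S : Finset (Fin p)) (hS : S.card = k)
    (α : ℝ) (hα : 0 < α) :
    (PMF.uniformOfFintype (Equiv.Perm (Fin p))).toOuterMeasure
        {σ : Equiv.Perm (Fin p) |
          (α / 3) * (k : ℝ) ≤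
            ((S.filter (fun i =>
                ∃ j ∈ S, j ≠ i ∧ (σ j : ℕ) / (p / B) = (σ i : ℕ) / (p / B))).card : ℝ)}
      ≤ ENNReal.ofReal ((3 / α) * (k : ℝ) ^ (-ε)) := by
  set m := p / B
  set G := Fintype.card (Equiv.Perm (Fin p))
  set N : Equiv.Perm (Fin p) → ℕ := fun σ =>
    #{i ∈ S | ∃ j ∈ S, j ≠ i ∧ (σ j : ℕ) / m = (σ i : ℕ) / m}
  obtain ⟨i₀, -⟩ := card_pos.1 (hS ▸ hk : 0 < #S)
  have hpm : p = B * m := (Nat.mul_div_cancel' hdvd).symm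
  have hm : 0 < m := Nat.pos_of_mul_pos_left (hpm ▸ i₀.pos)
  have hk' : (0 : ℝ) < k := by exact_mod_cast hk
  have hB : (0 : ℝ) < B := (Real.rpow_pos_of_pos hk' _).trans_le hBk
  have hsum : (∑ σ, N σ) * B ≤ k ^ 2 * G := by
    have := sum_card_collided_mul_card_le _ (card_filter_fin_div_eq_le hm) S
    rw [hS, Fintype.card_fin] at this
    refine Nat.le_of_mul_le_mul_right (?_ : (∑ σ, N σ) * B * m ≤ k ^ 2 * G * m) hm
    rw [mul_assoc, ← hpm]
    convert this
  have hsumR : (∑ σ, (N σ : ℝ)) * B ≤ k ^ 2 * G := by exact_mod_cast hsum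
  have hG : (0 : ℝ) < G := by exact_mod_cast Fintype.card_pos
  refine (toOuterMeasure_uniformOfFintype_le_sum_div (fun σ => (N σ : ℝ))
    (fun _ => Nat.cast_nonneg _) (by positivity : 0 < α / 3 * k)).trans
    (ENNReal.ofReal_le_ofReal ?_)
  calc (∑ σ, (N σ : ℝ)) / (α / 3 * k * G) ≤ k ^ 2 * G / B / (α / 3 * k * G) := by
        gcongr
        rwa [le_div_iff₀ hB]
    _ = 3 / α * (k / B) := by field_simp
    _ ≤ 3 / α * (k : ℝ) ^ (-ε) := by gcongr; exact div_le_rpow_neg_of_rpow_one_add_le hk' hBk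

/-- Under a uniformly random permutation `σ` of `Fin p` (uniform partition of `p` items into
`B` equal bins, item `i` assigned to bin `σ i / (p/B)`), if `B ≥ k^(1+ε)` then for a fixed
set `S` of `k` defectives and any `α > 0`, the number `N_col` of collided defectives
satisfies `P[N_col ≥ (α/3)·k] ≤ (3/α)·k^(−ε)`. -/
theorem random_binning_collision_count_markov
    (p B k : ℕ) (hp : 0 < p) (hB : 0 < B) (hk : 0 < k) (hdvd : B ∣ p)
    (ε : ℝ) (hε : 0 < ε) (hBk : (k : ℝ) ^ ((1 : ℝ) + ε) ≤ (B : ℝ))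
    (S : Finset (Fin p)) (hS : S.card = k)
    (α : ℝ) (hα : 0 < α) :
    (PMF.uniformOfFintype (Equiv.Perm (Fin p))).toOuterMeasure
        {σ : Equiv.Perm (Fin p) |
          (α / 3) * (k : ℝ) ≤
            ((S.filter (fun i =>
                ∃ j ∈ S, j ≠ i ∧ (σ j : ℕ) / (p / B) = (σ i : ℕ) / (p / B))).card : ℝ)}
      ≤ ENNReal.ofReal ((3 / α) * (k : ℝ) ^ (-ε)) :=
  random_binning_collision_count_markov_general p B k hk hdvd ε hBk S hS α hα
end

section
/- Let I be a finite set of items, S ⊆ I the set of defectives, B a positive integer, and bin : I → Fin B an assignment of items to bins. Let B* = {b : ∃ s ∈ S, bin(s) = b} be the set of bins containing a defective, C = {i ∈ S : ∃ j ∈ S, j ≠ i, bin(j) = bin(i)} the collided defectives, and M = {b : bin b contains at least two elements of S} the multi-defective bins. Let 𝓑 ⊆ Fin B be a set of declared bins and E ⊆ Fin B a set of error bins, and suppose the estimate Ŝ ⊆ I satisfies: (i) for every b ∉ 𝓑, no element of Ŝ is assigned to bin b; (ii) for every b ∈ Fin B, at most one element of Ŝ is assigned to bin b; (iii) for every b ∈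 𝓑 \ E such that exactly one element of S is assigned to bin b, the elements of Ŝ assigned to bin b coincide exactly with the elements of S assigned to bin b. Then |S \ Ŝ| ≤ |C| + |B* \ 𝓑| + |E| and |Ŝ \ S| ≤ |M| + |𝓑 \ B*| + |E|. -/
/-!
Charge every false negative and every false positive to its bin. Collided false negatives
are counted directly; one that is not collided is alone in its bin, so distinct such items
occupy distinct bins, and its bin was either never declared or decoded wrongly. A false
positive lies in a declared bin, and since the estimate has at most one item per bin,
distinct false positives occupy distinct bins; such a bin holds no defective (falsely
declared), several defectives, or exactly one defective that was decoded wrongly.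
-/

namespace GroupTesting

open Finset

variable {ι β : Type*} [DecidableEq β] (f : ι → β)

theorem injOn_of_card_filter_le_one {T : Finset ι}
    (hT : ∀ b, (T.filter (fun i => f i = b)).card ≤ 1) : Set.InjOn f ↑T := by
  intro i hi j hj hij
  exact card_le_one.1 (hT (f j)) i (mem_filter.2 ⟨hi, hij⟩) j (mem_filter.2 ⟨hj, rfl⟩)

variable [DecidableEq ι]

theorem filter_eq_singleton_of_not_collided {S : Finset ι} {i : ι} (hi : i ∈ S)
    (hnc : ¬∃ j ∈ S, j ≠ i ∧ f j = f i) : S.filter (fun x => f x = f i) = {i} := by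
  ext x
  simp only [mem_filter, mem_singleton]
  refine ⟨fun ⟨hx, hfx⟩ => ?_, by rintro rfl; exact ⟨hi, rfl⟩⟩
  by_contra hne
  exact hnc ⟨x, hx, hne, hfx⟩

theorem injOn_not_collided (S : Finset ι) :
    Set.InjOn f ↑(S.filter (fun i => ¬∃ j ∈ S, j ≠ i ∧ f j = f i)) := by
  intro i hi j hj hij
  simp only [coe_filter, Set.mem_ofPred_eq] at hi hj
  by_contra hne
  exact hi.2 ⟨j, hj.1, Ne.symm hne, hij.symm⟩

variable {S Shat : Finset ι} {D E : Finset β}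

theorem mem_of_false_negative_not_collided
    (hexact : ∀ b ∈ D \ E, (S.filter (fun i => f i = b)).card = 1 →
        Shat.filter (fun i => f i = b) = S.filter (fun i => f i = b))
    {i : ι} (hi : i ∈ S \ Shat) (hnc : ¬∃ j ∈ S, j ≠ i ∧ f j = f i) :
    f i ∈ (S.image f \ D) ∪ E := by
  obtain ⟨hiS, hiShat⟩ := mem_sdiff.1 hi
  have hsingle := filter_eq_singleton_of_not_collided f hiS hnc
  by_contra hbad
  simp only [mem_union, mem_sdiff, mem_image_of_mem f hiS, true_and, not_or, not_not] at hbad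
  have hfib := hexact (f i) (mem_sdiff.2 hbad) (by rw [hsingle, card_singleton])
  rw [hsingle] at hfib
  exact hiShat (mem_filter.1 (hfib ▸ mem_singleton_self i)).1

theorem mem_of_false_positive [Fintype β]
    (hundecl : ∀ b, b ∉ D → ∀ i ∈ Shat, f i ≠ b)
    (hexact : ∀ b ∈ D \ E, (S.filter (fun i => f i = b)).card = 1 →
        Shat.filter (fun i => f i = b) = S.filter (fun i => f i = b))
    {i : ι} (hi : i ∈ Shat \ S) :
    f i ∈ (univ.filter (fun b => 1 < (S.filter (fun i => f i = b)).card))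
      ∪ (D \ S.image f) ∪ E := by
  obtain ⟨hiShat, hiS⟩ := mem_sdiff.1 hi
  have hD : f i ∈ D := by
    by_contra hD
    exact hundecl (f i) hD i hiShat rfl
  by_contra hbad
  simp only [mem_union, mem_filter, mem_univ, true_and, mem_sdiff, hD, not_or, not_lt,
    not_not] at hbad
  obtain ⟨⟨hmulti, hoccupied⟩, hE⟩ := hbad
  have hone : (S.filter (fun x => f x = f i)).card = 1 := by
    refine le_antisymm hmulti (card_pos.2 ?_)
    obtain ⟨j, hj, hfj⟩ := mem_image.1 hoccupied
    exact ⟨j, mem_filter.2 ⟨hj, hfj⟩⟩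
  have hmem : i ∈ Shat.filter (fun x => f x = f i) := mem_filter.2 ⟨hiShat, rfl⟩
  rw [hexact (f i) (mem_sdiff.2 ⟨hD, hE⟩) hone] at hmem
  exact hiS (mem_filter.1 hmem).1

theorem card_false_negatives_le
    (hexact : ∀ b ∈ D \ E, (S.filter (fun i => f i = b)).card = 1 →
        Shat.filter (fun i => f i = b) = S.filter (fun i => f i = b)) :
    (S \ Shat).card ≤ (S.filter (fun i => ∃ j ∈ S, j ≠ i ∧ f j = f i)).card
      + (S.image f \ D).card + E.card := by
  have hcollided := card_le_card (filter_subset_filter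
    (fun i => ∃ j ∈ S, j ≠ i ∧ f j = f i) (sdiff_subset (s := S) (t := Shat)))
  have hlonely : ((S \ Shat).filter (fun i => ¬∃ j ∈ S, j ≠ i ∧ f j = f i)).card
      ≤ ((S.image f \ D) ∪ E).card :=
    card_le_card_of_injOn f
      (fun i hi => mem_of_false_negative_not_collided f hexact
        (mem_filter.1 hi).1 (mem_filter.1 hi).2)
      ((injOn_not_collided f S).mono (coe_subset.2 (filter_subset_filter _ sdiff_subset)))
  calc (S \ Shat).card
      = ((S \ Shat).filter (fun i => ∃ j ∈ S, j ≠ i ∧ f j = f i)).card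
        + ((S \ Shat).filter (fun i => ¬∃ j ∈ S, j ≠ i ∧ f j = f i)).card :=
        (card_filter_add_card_filter_not _).symm
    _ ≤ (S.filter (fun i => ∃ j ∈ S, j ≠ i ∧ f j = f i)).card
        + ((S.image f \ D) ∪ E).card :=
        add_le_add hcollided hlonely
    _ ≤ _ := by
        rw [add_assoc]
        exact Nat.add_le_add_left (card_union_le _ _) _

theorem card_false_positives_le [Fintype β]
    (hundecl : ∀ b, b ∉ D → ∀ i ∈ Shat, f i ≠ b)
    (hle_one : ∀ b, (Shat.filter (fun i => f i = b)).card ≤ 1)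
    (hexact : ∀ b ∈ D \ E, (S.filter (fun i => f i = b)).card = 1 →
        Shat.filter (fun i => f i = b) = S.filter (fun i => f i = b)) :
    (Shat \ S).card ≤ (univ.filter (fun b => 1 < (S.filter (fun i => f i = b)).card)).card
      + (D \ S.image f).card + E.card :=
  calc (Shat \ S).card
      ≤ ((univ.filter (fun b => 1 < (S.filter (fun i => f i = b)).card))
          ∪ (D \ S.image f) ∪ E).card :=
        card_le_card_of_injOn f (fun _ => mem_of_false_positive f hundecl hexact)
          ((injOn_of_card_filter_le_one f hle_one).mono (coe_subset.2 sdiff_subset))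
    _ ≤ _ := (card_union_le _ _).trans (Nat.add_le_add_right (card_union_le _ _) _)

end GroupTesting

theorem inner_algorithm_error_accounting_general
    {ι : Type*} [DecidableEq ι] (S : Finset ι)
    (B : ℕ) (bin : ι → Fin B)
    (Bdecl E : Finset (Fin B)) (Shat : Finset ι)
    (h1 : ∀ b : Fin B, b ∉ Bdecl → ∀ i ∈ Shat, bin i ≠ b)
    (h2 : ∀ b : Fin B, (Shat.filter (fun i => bin i = b)).card ≤ 1)
    (h3 : ∀ b ∈ Bdecl \ E, (S.filter (fun i => bin i = b)).card = 1 →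
        Shat.filter (fun i => bin i = b) = S.filter (fun i => bin i = b)) :
    (S \ Shat).card
        ≤ (S.filter (fun i => ∃ j ∈ S, j ≠ i ∧ bin j = bin i)).card
          + ((S.image bin) \ Bdecl).card + E.card
    ∧ (Shat \ S).card
        ≤ (Finset.univ.filter (fun b : Fin B =>
              1 < (S.filter (fun i => bin i = b)).card)).card
          + (Bdecl \ (S.image bin)).card + E.card :=
  ⟨GroupTesting.card_false_negatives_le bin h3,
    GroupTesting.card_false_positives_le bin h1 h2 h3⟩

/-- Deterministic error accounting for the inner two-stage algorithm. With defective set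
`S ⊆ I`, bins assigned by `bin`, declared bins `Bdecl`, decoding-error bins `E`, and an
estimate `Shat ⊆ I` that (i) contains no item from an undeclared bin, (ii) contains at most
one item per bin, and (iii) on every declared, error-free bin containing exactly one
defective, coincides there with the defectives; the false negatives are at most
(collided defectives) + (missed defective bins) + (error bins), and the false positives
are at most (multi-defective bins) + (falsely declared bins) + (error bins). -/
theorem inner_algorithm_error_accounting
    {ι : Type*} [DecidableEq ι] (I : Finset ι) (S : Finset ι) (hSI : S ⊆ I)
    (B : ℕ) (hB : 0 < B) (bin : ι → Fin B)
    (Bdecl E : Finset (Fin B)) (Shat : Finset ι) (hShatI : Shat ⊆ I)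
    (h1 : ∀ b : Fin B, b ∉ Bdecl → ∀ i ∈ Shat, bin i ≠ b)
    (h2 : ∀ b : Fin B, (Shat.filter (fun i => bin i = b)).card ≤ 1)
    (h3 : ∀ b ∈ Bdecl \ E, (S.filter (fun i => bin i = b)).card = 1 →
        Shat.filter (fun i => bin i = b) = S.filter (fun i => bin i = b)) :
    (S \ Shat).card
        ≤ (S.filter (fun i => ∃ j ∈ S, j ≠ i ∧ bin j = bin i)).card
          + ((S.image bin) \ Bdecl).card + E.card
    ∧ (Shat \ S).card
        ≤ (Finset.univ.filter (fun b : Fin B =>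
              1 < (S.filter (fun i => bin i = b)).card)).card
          + (Bdecl \ (S.image bin)).card + E.card :=
  inner_algorithm_error_accounting_general S B bin Bdecl E Shat h1 h2 h3
end
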